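/- arXiv:2412.14637 — 6 statements merged into one kernel-verified Lean document; each statement's English description precedes it below -/
import Mathlib

section
/- If R : ℝ^N → ℝ is twice continuously differentiable and (L₀, L₁)-smooth, then for all y₁, y₂ ∈ ℝ^N and all t ∈ [0,1], with γ(t) = (1−t)·y₁ + t·y₂, one has ‖∇R(γ(t)) − ∇R(y₁)‖ ≤ −L₀/L₁ − ‖∇R(y₁)‖ + (L₀/L₁ + ‖∇R(y₁)‖)·exp(L₁·‖y₂ − y₁‖·t). -/
/-!
Along the segment `s ↦ (1 - s) • y₁ + s • y₂` the increment `f s = ∇R(γ s) - ∇R(y₁)` has derivative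
`D(∇R)(γ s) (y₂ - y₁)`, and `(L₀, L₁)`-smoothness together with `‖∇R(γ s)‖ ≤ ‖f s‖ + ‖∇R(y₁)‖` gives
`‖f' s‖ ≤ K ‖f s‖ + ε` with `K = L₁ ‖y₂ - y₁‖` and `ε = (L₀ + L₁ ‖∇R(y₁)‖) ‖y₂ - y₁‖`.
Since `f 0 = 0`, Grönwall's inequality bounds `‖f t‖` by `(ε / K) (exp (K t) - 1)`, which is the claim.
-/

open Set Real AffineMap

theorem ContDiff.contDiff_gradient {F : Type*} [NormedAddCommGroup F] [InnerProductSpace ℝ F]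
    [CompleteSpace F] {f : F → ℝ} {m n : WithTop ℕ∞} (hf : ContDiff ℝ n f) (hmn : m + 1 ≤ n) :
    ContDiff ℝ m (gradient f) :=
  (InnerProductSpace.toDual ℝ F).symm.contDiff.comp (hf.fderiv_right hmn)

theorem gronwallBound_zero_mul_eq {L₀ L₁ : ℝ} (hL₁ : L₁ ≠ 0) (a r t : ℝ) :
    gronwallBound 0 (L₁ * r) ((L₀ + L₁ * a) * r) t = (L₀ / L₁ + a) * (exp (L₁ * r * t) - 1) := by
  rcases eq_or_ne r 0 with rfl | hr
  · simp [gronwallBound_K0]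
  · rw [gronwallBound_of_K_ne_0 (mul_ne_zero hL₁ hr)]
    field_simp
    ring

section AffineBound

variable {E F : Type*} [NormedAddCommGroup E] [NormedSpace ℝ E] [NormedAddCommGroup F]
  [NormedSpace ℝ F] {g : E → F} {L₀ L₁ : ℝ}

theorem norm_fderiv_apply_le_of_norm_fderiv_le_affine (hL₁ : 0 ≤ L₁)
    (hbound : ∀ z, ‖fderiv ℝ g z‖ ≤ L₀ + L₁ * ‖g z‖) (x z v : E) :
    ‖fderiv ℝ g z v‖ ≤ L₁ * ‖v‖ * ‖g z - g x‖ + (L₀ + L₁ * ‖g x‖) * ‖v‖ := by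
  have hgz : ‖g z‖ ≤ ‖g z - g x‖ + ‖g x‖ := norm_le_norm_sub_add _ _
  calc ‖fderiv ℝ g z v‖ ≤ ‖fderiv ℝ g z‖ * ‖v‖ := (fderiv ℝ g z).le_opNorm v
    _ ≤ (L₀ + L₁ * ‖g z‖) * ‖v‖ := by gcongr; exact hbound z
    _ ≤ (L₀ + L₁ * (‖g z - g x‖ + ‖g x‖)) * ‖v‖ := by gcongr
    _ = L₁ * ‖v‖ * ‖g z - g x‖ + (L₀ + L₁ * ‖g x‖) * ‖v‖ := by ring

theorem norm_sub_le_of_norm_fderiv_le_affine (hg : Differentiable ℝ g) (hL₁ : 0 < L₁)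
    (hbound : ∀ z, ‖fderiv ℝ g z‖ ≤ L₀ + L₁ * ‖g z‖) (x y : E) {t : ℝ} (ht : t ∈ Icc 0 1) :
    ‖g (lineMap x y t) - g x‖ ≤ (L₀ / L₁ + ‖g x‖) * (exp (L₁ * ‖y - x‖ * t) - 1) := by
  set f : ℝ → F := fun s ↦ g (lineMap x y s) - g x
  have hf : ∀ s, HasDerivAt f (fderiv ℝ g (lineMap x y s) (y - x)) s := fun s ↦
    ((hg _).hasFDerivAt.comp_hasDerivAt s hasDerivAt_lineMap).sub_const (g x)
  have hgronwall := norm_le_gronwallBound_of_norm_deriv_right_le (δ := 0)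
    (fun s _ ↦ (hf s).continuousAt.continuousWithinAt) (fun s _ ↦ (hf s).hasDerivWithinAt)
    (by simp [f]) (fun s _ ↦ norm_fderiv_apply_le_of_norm_fderiv_le_affine hL₁.le hbound x _ _)
    t ht
  rwa [sub_zero, gronwallBound_zero_mul_eq hL₁.ne'] at hgronwall

end AffineBound

theorem stmt_1_general {N : ℕ} (R : EuclideanSpace ℝ (Fin N) → ℝ) (L₀ L₁ : ℝ)
    (hR : ContDiff ℝ 2 R) (hL₁ : 0 < L₁)
    (hsmooth : ∀ θ : EuclideanSpace ℝ (Fin N),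
      ‖fderiv ℝ (gradient R) θ‖ ≤ L₀ + L₁ * ‖gradient R θ‖)
    (y₁ y₂ : EuclideanSpace ℝ (Fin N)) (t : ℝ) (ht : t ∈ Set.Icc (0 : ℝ) 1) :
    ‖gradient R ((1 - t) • y₁ + t • y₂) - gradient R y₁‖ ≤
      -(L₀ / L₁) - ‖gradient R y₁‖ +
        (L₀ / L₁ + ‖gradient R y₁‖) * Real.exp (L₁ * ‖y₂ - y₁‖ * t) := by
  have hgrad : Differentiable ℝ (gradient R) :=
    (hR.contDiff_gradient (m := 1) (by norm_num)).differentiable one_ne_zero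
  have h := norm_sub_le_of_norm_fderiv_le_affine hgrad hL₁ hsmooth y₁ y₂ ht
  rw [lineMap_apply_module] at h
  linarith

theorem stmt_1 {N : ℕ} (R : EuclideanSpace ℝ (Fin N) → ℝ) (L₀ L₁ : ℝ)
    (hR : ContDiff ℝ 2 R) (hL₀ : 0 ≤ L₀) (hL₁ : 0 < L₁)
    (hsmooth : ∀ θ : EuclideanSpace ℝ (Fin N),
      ‖fderiv ℝ (gradient R) θ‖ ≤ L₀ + L₁ * ‖gradient R θ‖)
    (y₁ y₂ : EuclideanSpace ℝ (Fin N)) (t : ℝ) (ht : t ∈ Set.Icc (0 : ℝ) 1) :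
    ‖gradient R ((1 - t) • y₁ + t • y₂) - gradient R y₁‖ ≤
      -(L₀ / L₁) - ‖gradient R y₁‖ +
        (L₀ / L₁ + ‖gradient R y₁‖) * Real.exp (L₁ * ‖y₂ - y₁‖ * t) :=
  stmt_1_general R L₀ L₁ hR hL₁ hsmooth y₁ y₂ t ht
end

section
/- If R : ℝ^N → ℝ is twice continuously differentiable and (L₀, L₁)-smooth, then for all y₁, y₂ ∈ ℝ^N: R(y₂) − R(y₁) ≤ ∇R(y₁)·(y₂ − y₁) − (L₀ + L₁‖∇R(y₁)‖)·‖y₂ − y₁‖/L₁ − (L₀ + L₁‖∇R(y₁)‖)/L₁² + (L₀ + L₁‖∇R(y₁)‖)·exp(L₁‖y₂ − y₁‖)/L₁². -/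
/-!
Along the segment from `y₁` to `y₂`, (L₀, L₁)-smoothness bounds the derivative of
`t ↦ ∇R(y₁ + t (y₂ - y₁)) - ∇R(y₁)` by an affine function of its own norm, so Grönwall's
inequality controls the drift of the gradient by `A / L₁ · (exp (L₁ t ‖y₂ - y₁‖) - 1)`,
where `A = L₀ + L₁ ‖∇R(y₁)‖`. Integrating this bound against `y₂ - y₁` gives the claim.
-/

open Real Set InnerProductSpace
open AffineMap (lineMap hasDerivAt_lineMap)

variable {E : Type*} [NormedAddCommGroup E]

theorem ContDiff.gradient [InnerProductSpace ℝ E] [CompleteSpace E] {R : E → ℝ}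
    {n : WithTop ℕ∞} (hR : ContDiff ℝ (n + 1) R) : ContDiff ℝ n (gradient R) :=
  (toDual ℝ E).symm.contDiff.comp (hR.fderiv_right le_rfl)

theorem norm_sub_le_of_norm_fderiv_le_add_mul_norm [NormedSpace ℝ E]
    {F : Type*} [NormedAddCommGroup F] [NormedSpace ℝ F] {G : E → F} (hG : Differentiable ℝ G)
    {L₀ L₁ : ℝ} (hL₁ : 0 < L₁) (hsmooth : ∀ θ, ‖fderiv ℝ G θ‖ ≤ L₀ + L₁ * ‖G θ‖) (x y : E) :
    ‖G y - G x‖ ≤ (L₀ + L₁ * ‖G x‖) / L₁ * (exp (L₁ * ‖y - x‖) - 1) := by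
  rcases eq_or_ne y x with rfl | hyx
  · simp
  set f : ℝ → F := fun t => G (lineMap x y t) - G x
  have hf : ∀ t, HasDerivAt f (fderiv ℝ G (lineMap x y t) (y - x)) t := fun t =>
    ((hG _).hasFDerivAt.comp_hasDerivAt t hasDerivAt_lineMap).sub_const _
  have hv : 0 < ‖y - x‖ := norm_pos_iff.mpr (sub_ne_zero.mpr hyx)
  have hderiv : ∀ t, ‖fderiv ℝ G (lineMap x y t) (y - x)‖
      ≤ L₁ * ‖y - x‖ * ‖f t‖ + (L₀ + L₁ * ‖G x‖) * ‖y - x‖ := fun t => by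
    have hGt : ‖G (lineMap x y t)‖ ≤ ‖G x‖ + ‖f t‖ := norm_le_insert' _ _
    calc ‖fderiv ℝ G (lineMap x y t) (y - x)‖
        ≤ ‖fderiv ℝ G (lineMap x y t)‖ * ‖y - x‖ := (fderiv ℝ G _).le_opNorm _
      _ ≤ (L₀ + L₁ * (‖G x‖ + ‖f t‖)) * ‖y - x‖ := by
        gcongr
        exact (hsmooth _).trans (by gcongr)
      _ = _ := by ring
  have := norm_le_gronwallBound_of_norm_deriv_right_le (f := f) (a := 0) (b := 1) (δ := 0)
    (fun t _ => (hf t).continuousAt.continuousWithinAt) (fun t _ => (hf t).hasDerivWithinAt)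
    (by simp [f]) (fun t _ => hderiv t) 1 (by simp)
  simpa [f, gronwallBound_of_K_ne_0 (mul_pos hL₁ hv).ne', mul_div_mul_right _ _ hv.ne'] using this

theorem sub_sub_inner_gradient_le_of_norm_gradient_sub_le [InnerProductSpace ℝ E]
    [CompleteSpace E] {R : E → ℝ} (hR : Differentiable ℝ R) {x : E} {a L : ℝ} (hL : L ≠ 0)
    (hgrad : ∀ z, ‖gradient R z - gradient R x‖ ≤ a / L * (exp (L * ‖z - x‖) - 1)) (y : E) :
    R y - R x - inner ℝ (gradient R x) (y - x)
      ≤ a / L ^ 2 * (exp (L * ‖y - x‖) - 1 - L * ‖y - x‖) := by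
  set f : ℝ → ℝ := fun t => R (lineMap x y t) - R x - t * inner ℝ (gradient R x) (y - x)
  set B : ℝ → ℝ := fun t => a / L ^ 2 * (exp (L * ‖y - x‖ * t) - 1 - L * ‖y - x‖ * t)
  have hf : ∀ t, HasDerivAt f (inner ℝ (gradient R (lineMap x y t) - gradient R x) (y - x)) t := by
    intro t
    have hRt := (hR _).hasFDerivAt.comp_hasDerivAt t (hasDerivAt_lineMap (a := x) (b := y))
    rw [← inner_gradient_left] at hRt
    exact ((hRt.sub_const (R x)).sub ((hasDerivAt_id t).mul_const _)).congr_deriv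
      (by rw [inner_sub_left]; ring)
  have hB : ∀ t, HasDerivAt B (a / L * ‖y - x‖ * (exp (L * ‖y - x‖ * t) - 1)) t := by
    intro t
    have hlin := (hasDerivAt_id' t).const_mul (L * ‖y - x‖)
    exact (((hlin.exp.sub_const 1).sub hlin).const_mul (a / L ^ 2)).congr_deriv (by field_simp)
  have hbound : ∀ t ∈ Ico (0 : ℝ) 1,
      inner ℝ (gradient R (lineMap x y t) - gradient R x) (y - x)
        ≤ a / L * ‖y - x‖ * (exp (L * ‖y - x‖ * t) - 1) := by
    intro t ht
    have hdist : ‖lineMap x y t - x‖ = t * ‖y - x‖ := by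
      rw [← dist_eq_norm, dist_lineMap_left, Real.norm_of_nonneg ht.1, dist_comm, dist_eq_norm]
    calc _ ≤ ‖gradient R (lineMap x y t) - gradient R x‖ * ‖y - x‖ := real_inner_le_norm _ _
      _ ≤ a / L * (exp (L * (t * ‖y - x‖)) - 1) * ‖y - x‖ := by
        gcongr; simpa [hdist] using hgrad (lineMap x y t)
      _ = _ := by ring_nf
  have := image_le_of_deriv_right_le_deriv_boundary (a := 0) (b := 1)
    (fun t _ => (hf t).continuousAt.continuousWithinAt) (fun t _ => (hf t).hasDerivWithinAt)
    (by simp [f, B]) (fun t _ => (hB t).continuousAt.continuousWithinAt)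
    (fun t _ => (hB t).hasDerivWithinAt) hbound (right_mem_Icc.mpr zero_le_one)
  simpa [f, B] using this

theorem stmt_2_general {N : ℕ} (R : EuclideanSpace ℝ (Fin N) → ℝ) (L₀ L₁ : ℝ)
    (hR : ContDiff ℝ 2 R) (hL₁ : 0 < L₁)
    (hsmooth : ∀ θ : EuclideanSpace ℝ (Fin N),
      ‖fderiv ℝ (gradient R) θ‖ ≤ L₀ + L₁ * ‖gradient R θ‖)
    (y₁ y₂ : EuclideanSpace ℝ (Fin N)) :
    R y₂ - R y₁ ≤ (inner ℝ (gradient R y₁) (y₂ - y₁) : ℝ)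
      - (L₀ + L₁ * ‖gradient R y₁‖) * ‖y₂ - y₁‖ / L₁
      - (L₀ + L₁ * ‖gradient R y₁‖) / L₁ ^ 2
      + (L₀ + L₁ * ‖gradient R y₁‖) * Real.exp (L₁ * ‖y₂ - y₁‖) / L₁ ^ 2 := by
  have hgrad : Differentiable ℝ (gradient R) :=
    (hR.gradient (n := 1)).differentiable one_ne_zero
  have key := sub_sub_inner_gradient_le_of_norm_gradient_sub_le (hR.differentiable two_ne_zero)
    hL₁.ne' (norm_sub_le_of_norm_fderiv_le_add_mul_norm hgrad hL₁ hsmooth y₁) y₂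
  rw [sub_le_iff_le_add'] at key
  convert key using 1
  field_simp
  ring

theorem stmt_2 {N : ℕ} (R : EuclideanSpace ℝ (Fin N) → ℝ) (L₀ L₁ : ℝ)
    (hR : ContDiff ℝ 2 R) (hL₀ : 0 ≤ L₀) (hL₁ : 0 < L₁)
    (hsmooth : ∀ θ : EuclideanSpace ℝ (Fin N),
      ‖fderiv ℝ (gradient R) θ‖ ≤ L₀ + L₁ * ‖gradient R θ‖)
    (y₁ y₂ : EuclideanSpace ℝ (Fin N)) :
    R y₂ - R y₁ ≤ (inner ℝ (gradient R y₁) (y₂ - y₁) : ℝ)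
      - (L₀ + L₁ * ‖gradient R y₁‖) * ‖y₂ - y₁‖ / L₁
      - (L₀ + L₁ * ‖gradient R y₁‖) / L₁ ^ 2
      + (L₀ + L₁ * ‖gradient R y₁‖) * Real.exp (L₁ * ‖y₂ - y₁‖) / L₁ ^ 2 :=
  stmt_2_general R L₀ L₁ hR hL₁ hsmooth y₁ y₂
end

section
/- Let R be (L₀, L₁)-smooth with L₀ > 0, L₁ > 0, lower bounded by R*, λ ∈ (0,1), f₁ > 1, and let (θₙ) be a sequence with R(θ_{k+1}) ≤ R(θ_k) such that at each iteration k the step ηₖ found by the backtracking satisfies ηₖ ≥ η̃ₖ/f₁ where η̃ₖ = (1/(L₁‖∇R(θₖ)‖))·ln((L₀ + L₁(2−λ)‖∇R(θₖ)‖)/(L₀ + L₁‖∇R(θₖ)‖)), and the Armijo condition R(θ_{k+1}) − R(θ_k) ≤ −ληₖ‖∇R(θₖ)‖² holds. Then for any ε > 0, if n ≥ f₁·L₁·(R(θ₀) − R*)/(λ·ε·ln((L₀ + L₁(2−λ)ε)/(L₀ + L₁ε))), there exists k ≤ n with ‖∇R(θₖ)‖ ≤ ε. -/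
/-!
The guaranteed step `η̃(g) = log((L₀ + L₁(2-λ)g)/(L₀ + L₁g)) / (L₁g)` at gradient norm `g`
satisfies `g² η̃(g) = g · log(…)/L₁`, which is increasing in `g`. Hence, as long as every gradient
norm exceeds `ε`, the Armijo condition forces a decrease of at least
`c = λ ε log((L₀ + L₁(2-λ)ε)/(L₀ + L₁ε)) / (f₁ L₁)` per iteration, and `R` can only drop by
`R(θ₀) - R*` in total, so this can last for fewer than `(R(θ₀) - R*)/c` iterations.
-/

open Set

noncomputable def logRatio (L₀ L₁ lam g : ℝ) : ℝ :=
  Real.log ((L₀ + L₁ * (2 - lam) * g) / (L₀ + L₁ * g))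

section logRatio

variable {L₀ L₁ lam : ℝ}

lemma logRatio_pos (hL₀ : 0 ≤ L₀) (hL₁ : 0 < L₁) (hlam : lam < 1) {g : ℝ} (hg : 0 < g) :
    0 < logRatio L₀ L₁ lam g := by
  have hden : 0 < L₀ + L₁ * g := by positivity
  apply Real.log_pos
  rw [lt_div_iff₀ hden]
  nlinarith [mul_pos (mul_pos hL₁ (sub_pos.mpr hlam)) hg]

lemma logRatio_mono (hL₀ : 0 ≤ L₀) (hL₁ : 0 < L₁) (hlam : lam ≤ 1) {g h : ℝ} (hg : 0 < g)
    (hgh : g ≤ h) : logRatio L₀ L₁ lam g ≤ logRatio L₀ L₁ lam h := by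
  have hden_g : 0 < L₀ + L₁ * g := by positivity
  have hden_h : 0 < L₀ + L₁ * h := by nlinarith
  have hnum_g : 0 < L₀ + L₁ * (2 - lam) * g := by nlinarith [mul_pos hL₁ hg]
  apply Real.log_le_log (div_pos hnum_g hden_g)
  rw [div_le_div_iff₀ hden_g hden_h]
  nlinarith [mul_nonneg (mul_nonneg (mul_nonneg hL₀ hL₁.le) (sub_nonneg.mpr hlam))
    (sub_nonneg.mpr hgh)]

end logRatio

lemma armijo_decrease_lower_bound {L₀ L₁ lam f₁ ε g η : ℝ} (hL₀ : 0 ≤ L₀) (hL₁ : 0 < L₁)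
    (hlam : lam ∈ Ioo (0 : ℝ) 1) (hf₁ : 0 < f₁) (hε : 0 < ε) (hεg : ε ≤ g)
    (hη : 1 / f₁ * (1 / (L₁ * g)) * logRatio L₀ L₁ lam g ≤ η) :
    lam * ε * logRatio L₀ L₁ lam ε / (f₁ * L₁) ≤ lam * η * g ^ 2 := by
  have hg : 0 < g := hε.trans_le hεg
  have hBε := logRatio_pos hL₀ hL₁ hlam.2 hε
  have hmono := logRatio_mono hL₀ hL₁ hlam.2.le hε hεg
  have hlam₀ := hlam.1.le
  calc lam * ε * logRatio L₀ L₁ lam ε / (f₁ * L₁)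
      ≤ lam * g * logRatio L₀ L₁ lam g / (f₁ * L₁) := by gcongr
    _ = lam * g ^ 2 * (1 / f₁ * (1 / (L₁ * g)) * logRatio L₀ L₁ lam g) := by
      field_simp
    _ ≤ lam * g ^ 2 * η := by gcongr
    _ = lam * η * g ^ 2 := by ring

lemma le_sub_mul_of_forall_succ_le_sub {r : ℕ → ℝ} {c : ℝ} {n : ℕ}
    (hdec : ∀ k < n, r (k + 1) ≤ r k - c) : r n ≤ r 0 - n * c := by
  induction n with
  | zero => simp
  | succ m ih =>
    have hstep := hdec m (Nat.lt_succ_self m)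
    have hprev := ih fun k hk => hdec k (hk.trans (Nat.lt_succ_self m))
    push_cast
    linarith

lemma lt_div_of_forall_succ_le_sub {r : ℕ → ℝ} {rstar c : ℝ} (hc : 0 < c)
    (hbound : ∀ k, rstar ≤ r k) (n : ℕ) (hdec : ∀ k ≤ n, r (k + 1) ≤ r k - c) :
    (n : ℝ) < (r 0 - rstar) / c := by
  have htotal : r (n + 1) ≤ r 0 - (n + 1 : ℕ) * c :=
    le_sub_mul_of_forall_succ_le_sub fun k hk => hdec k (Nat.lt_succ_iff.mp hk)
  have hlow := hbound (n + 1)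
  push_cast at htotal
  rw [lt_div_iff₀ hc]
  linarith

theorem stmt_4_general {N : ℕ} (R : EuclideanSpace ℝ (Fin N) → ℝ) (L₀ L₁ lam f₁ Rstar : ℝ)
    (hL₀ : 0 < L₀) (hL₁ : 0 < L₁)
    (hlam : lam ∈ Set.Ioo (0 : ℝ) 1) (hf₁ : 1 < f₁)
    (hbound : ∀ θ, Rstar ≤ R θ)
    (θ : ℕ → EuclideanSpace ℝ (Fin N)) (η : ℕ → ℝ)
    (hstep : ∀ k, η k ≥ (1 / f₁) * (1 / (L₁ * ‖gradient R (θ k)‖)) *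
      Real.log ((L₀ + L₁ * (2 - lam) * ‖gradient R (θ k)‖) /
        (L₀ + L₁ * ‖gradient R (θ k)‖)))
    (harmijo : ∀ k, R (θ (k + 1)) - R (θ k) ≤ -lam * η k * ‖gradient R (θ k)‖ ^ 2)
    (ε : ℝ) (hε : 0 < ε) (n : ℕ)
    (hn : (n : ℝ) ≥ f₁ * L₁ * (R (θ 0) - Rstar) /
      (lam * ε * Real.log ((L₀ + L₁ * (2 - lam) * ε) / (L₀ + L₁ * ε)))) :
    ∃ k ≤ n, ‖gradient R (θ k)‖ ≤ ε := by
  by_contra! hlarge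
  have hf₁₀ : 0 < f₁ := zero_lt_one.trans hf₁
  have hB := logRatio_pos hL₀.le hL₁ hlam.2 hε
  have hdesc : ∀ k ≤ n,
      R (θ (k + 1)) ≤ R (θ k) - lam * ε * logRatio L₀ L₁ lam ε / (f₁ * L₁) := fun k hk => by
    have := armijo_decrease_lower_bound hL₀.le hL₁ hlam hf₁₀ hε (hlarge k hk).le (hstep k)
    linarith [harmijo k]
  have hfew := lt_div_of_forall_succ_le_sub (r := fun k => R (θ k))
    (div_pos (mul_pos (mul_pos hlam.1 hε) hB) (mul_pos hf₁₀ hL₁))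
    (fun k => hbound (θ k)) n hdesc
  rw [div_div_eq_mul_div, mul_comm] at hfew
  exact hfew.not_ge hn

theorem stmt_4 {N : ℕ} (R : EuclideanSpace ℝ (Fin N) → ℝ) (L₀ L₁ lam f₁ Rstar : ℝ)
    (hR : ContDiff ℝ 2 R) (hL₀ : 0 < L₀) (hL₁ : 0 < L₁)
    (hlam : lam ∈ Set.Ioo (0 : ℝ) 1) (hf₁ : 1 < f₁)
    (hsmooth : ∀ θ : EuclideanSpace ℝ (Fin N),
      ‖fderiv ℝ (gradient R) θ‖ ≤ L₀ + L₁ * ‖gradient R θ‖)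
    (hbound : ∀ θ, Rstar ≤ R θ)
    (θ : ℕ → EuclideanSpace ℝ (Fin N)) (η : ℕ → ℝ)
    (hrec : ∀ k, θ (k + 1) = θ k - η k • gradient R (θ k))
    (hdec : ∀ k, R (θ (k + 1)) ≤ R (θ k))
    (hstep : ∀ k, η k ≥ (1 / f₁) * (1 / (L₁ * ‖gradient R (θ k)‖)) *
      Real.log ((L₀ + L₁ * (2 - lam) * ‖gradient R (θ k)‖) /
        (L₀ + L₁ * ‖gradient R (θ k)‖)))
    (harmijo : ∀ k, R (θ (k + 1)) - R (θ k) ≤ -lam * η k * ‖gradient R (θ k)‖ ^ 2)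
    (ε : ℝ) (hε : 0 < ε) (n : ℕ)
    (hn : (n : ℝ) ≥ f₁ * L₁ * (R (θ 0) - Rstar) /
      (lam * ε * Real.log ((L₀ + L₁ * (2 - lam) * ε) / (L₀ + L₁ * ε)))) :
    ∃ k ≤ n, ‖gradient R (θ k)‖ ≤ ε :=
  stmt_4_general R L₀ L₁ lam f₁ Rstar hL₀ hL₁ hlam hf₁ hbound θ η hstep harmijo ε hε n hn
end

section
/- The function z ↦ z·ln((L₀ + L₁(2−λ)z)/(L₀ + L₁z)) is monotone increasing on [0, ∞) when L₀ > 0, L₁ > 0 and λ ∈ (0,1). -/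
/-!
Write the logarithm's argument as `(a + b z) / (a + c z)` with `a = L₀`, `c = L₁`, `b = (2 - λ) L₁ ≥ c`.
Cross-multiplying, this ratio is nondecreasing on `[0, ∞)` because the difference of the cross products
is `a (b - c) (y - x) ≥ 0`, and it is at least `1` there. So `z ↦ z · ln(…)` is a product of two
nonnegative nondecreasing functions.
-/

open Set Real

section AffineRatio

variable {a b c : ℝ}

lemma one_le_affine_div_affine (ha : 0 < a) (hc : 0 ≤ c) (hcb : c ≤ b) {z : ℝ} (hz : 0 ≤ z) :
    1 ≤ (a + b * z) / (a + c * z) :=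
  (one_le_div (by positivity)).2 (by gcongr)

lemma monotoneOn_affine_div_affine (ha : 0 < a) (hc : 0 ≤ c) (hcb : c ≤ b) :
    MonotoneOn (fun z => (a + b * z) / (a + c * z)) (Ici 0) := by
  intro x (hx : 0 ≤ x) y (hy : 0 ≤ y) hxy
  rw [div_le_div_iff₀ (by positivity) (by positivity)]
  nlinarith [mul_nonneg (mul_nonneg ha.le (sub_nonneg.2 hcb)) (sub_nonneg.2 hxy)]

end AffineRatio

theorem stmt_6 (L₀ L₁ lam : ℝ) (hL₀ : 0 < L₀) (hL₁ : 0 < L₁)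
    (hlam : lam ∈ Set.Ioo (0 : ℝ) 1) :
    MonotoneOn (fun z : ℝ =>
      z * Real.log ((L₀ + L₁ * (2 - lam) * z) / (L₀ + L₁ * z))) (Set.Ici 0) := by
  have hcb : L₁ ≤ L₁ * (2 - lam) := by nlinarith [hlam.2]
  have hratio := monotoneOn_affine_div_affine hL₀ hL₁.le hcb
  have hone_le (z : ℝ) (hz : z ∈ Ici (0 : ℝ)) := one_le_affine_div_affine hL₀ hL₁.le hcb hz
  exact monotoneOn_id.mul
    (fun x hx y hy hxy => log_le_log (zero_lt_one.trans_le (hone_le x hx)) (hratio hx hy hxy))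
    (fun _ hx => hx) (fun x hx => log_nonneg (hone_le x hx))
end

section
/- Let R : ℝ^N → ℝ be differentiable with ∇R L-Lipschitz on a convex set containing θ and θ − η∇R(θ), and let λ ∈ (0,1). If 0 < η ≤ 2(1−λ)/((1+2λ)·L), then R(θ − η∇R(θ)) − R(θ) ≤ −λ·η·‖∇R(θ)‖·‖∇R(θ − η∇R(θ))‖. -/
/-!
For the gradient step `y = θ - η ∇R θ`, the descent lemma gives
`R y - R θ ≤ -η (1 - L η / 2) ‖∇R θ‖²`, and Lipschitz continuity of the gradient gives
`‖∇R y‖ ≤ (1 + L η) ‖∇R θ‖`. The step-size bound is equivalent to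
`λ (1 + L η) ≤ 1 - L η / 2`, so the first bound dominates `λ η ‖∇R θ‖ ‖∇R y‖`.
-/

open InnerProductSpace NNReal
open scoped Gradient

variable {E : Type*} [NormedAddCommGroup E] [InnerProductSpace ℝ E]
  {f : E → ℝ} {K : ℝ≥0} {s : Set E}

lemma LipschitzOnWith.inner_sub_le {g : E → E} (hg : LipschitzOnWith K g s) {x y : E}
    (hx : x ∈ s) (hy : y ∈ s) (v : E) : ⟪g y - g x, v⟫_ℝ ≤ K * ‖y - x‖ * ‖v‖ :=
  (real_inner_le_norm _ _).trans <|
    mul_le_mul_of_nonneg_right (hg.norm_sub_le hy hx) (norm_nonneg v)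

variable [CompleteSpace E]

lemma hasDerivAt_comp_add_smul (hf : Differentiable ℝ f) (x v : E) (t : ℝ) :
    HasDerivAt (fun t : ℝ => f (x + t • v)) ⟪∇ f (x + t • v), v⟫_ℝ t := by
  have hline : HasDerivAt (fun t : ℝ => x + t • v) v t := by
    simpa using ((hasDerivAt_id t).smul_const v).const_add x
  rw [inner_gradient_left]
  exact (hf _).hasFDerivAt.comp_hasDerivAt t hline

theorem Convex.descent_lemma (hs : Convex ℝ s) (hf : Differentiable ℝ f)
    (hlip : LipschitzOnWith K (∇ f) s) {x y : E} (hx : x ∈ s) (hy : y ∈ s) :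
    f y ≤ f x + ⟪∇ f x, y - x⟫_ℝ + K / 2 * ‖y - x‖ ^ 2 := by
  set v := y - x
  -- `ψ` has derivative `⟪∇ f (x + t v) - ∇ f x, v⟫ - K t ‖v‖² ≤ 0` on `[0, 1]`.
  set ψ : ℝ → ℝ := fun t => f (x + t • v) - t * ⟪∇ f x, v⟫_ℝ - K / 2 * t ^ 2 * ‖v‖ ^ 2
  have hψ : ∀ t, HasDerivAt ψ (⟪∇ f (x + t • v), v⟫_ℝ - ⟪∇ f x, v⟫_ℝ - K * t * ‖v‖ ^ 2) t := by
    intro t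
    have hquad := ((hasDerivAt_pow 2 t).const_mul (K / 2 : ℝ)).mul_const (‖v‖ ^ 2)
    refine (((hasDerivAt_comp_add_smul hf x v t).sub
      ((hasDerivAt_id t).mul_const ⟪∇ f x, v⟫_ℝ)).sub hquad).congr_deriv ?_
    ring
  have hψ_anti : ψ 1 ≤ ψ 0 := by
    refine antitoneOn_of_deriv_nonpos (convex_Icc 0 1)
      (fun t _ => (hψ t).continuousAt.continuousWithinAt)
      (fun t _ => (hψ t).differentiableAt.differentiableWithinAt) ?_
      (by simp) (by simp) zero_le_one
    intro t ht
    rw [interior_Icc] at ht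
    have hxt : x + t • v ∈ s := hs.add_smul_sub_mem hx hy ⟨ht.1.le, ht.2.le⟩
    have hinner := hlip.inner_sub_le hx hxt v
    rw [add_sub_cancel_left, norm_smul, Real.norm_of_nonneg ht.1.le, inner_sub_left] at hinner
    rw [(hψ t).deriv]
    linarith
  have hψ0 : ψ 0 = f x := by simp [ψ]
  have hψ1 : ψ 1 = f y - ⟪∇ f x, v⟫_ℝ - K / 2 * ‖v‖ ^ 2 := by simp [ψ, v]
  linarith

theorem apply_gradient_step_sub_le (hs : Convex ℝ s) (hf : Differentiable ℝ f)
    (hlip : LipschitzOnWith K (∇ f) s) {x : E} {η : ℝ} (hη : 0 ≤ η) (hx : x ∈ s)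
    (hy : x - η • ∇ f x ∈ s) :
    f (x - η • ∇ f x) - f x ≤ -η * (1 - K * η / 2) * ‖∇ f x‖ ^ 2 := by
  have hdesc := hs.descent_lemma hf hlip hx hy
  rw [sub_sub_cancel_left, norm_neg, norm_smul, Real.norm_of_nonneg hη, inner_neg_right,
    real_inner_smul_right, real_inner_self_eq_norm_sq] at hdesc
  linarith

theorem norm_gradient_step_le (hlip : LipschitzOnWith K (∇ f) s) {x : E} {η : ℝ} (hη : 0 ≤ η)
    (hx : x ∈ s) (hy : x - η • ∇ f x ∈ s) :
    ‖∇ f (x - η • ∇ f x)‖ ≤ (1 + K * η) * ‖∇ f x‖ := by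
  have hstep : ‖∇ f (x - η • ∇ f x) - ∇ f x‖ ≤ K * (η * ‖∇ f x‖) :=
    hlip.norm_sub_le_of_le hy hx <| by
      rw [sub_sub_cancel_left, norm_neg, norm_smul, Real.norm_of_nonneg hη]
  linarith [norm_le_norm_add_norm_sub' (∇ f (x - η • ∇ f x)) (∇ f x)]

theorem armijo_of_gradient_step (hs : Convex ℝ s) (hf : Differentiable ℝ f)
    (hlip : LipschitzOnWith K (∇ f) s) {x : E} {η lam : ℝ} (hη : 0 ≤ η) (hlam : 0 ≤ lam)
    (hstep : η * ((1 + 2 * lam) * K) ≤ 2 * (1 - lam)) (hx : x ∈ s)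
    (hy : x - η • ∇ f x ∈ s) :
    f (x - η • ∇ f x) - f x ≤ -lam * η * ‖∇ f x‖ * ‖∇ f (x - η • ∇ f x)‖ := by
  have hdecr := apply_gradient_step_sub_le hs hf hlip hη hx hy
  have hnorm := norm_gradient_step_le hlip hη hx hy
  have hcoef : lam * (1 + K * η) ≤ 1 - K * η / 2 := by linarith
  have hg : 0 ≤ η * ‖∇ f x‖ := mul_nonneg hη (norm_nonneg _)
  calc f (x - η • ∇ f x) - f x ≤ -η * (1 - K * η / 2) * ‖∇ f x‖ ^ 2 := hdecr
    _ ≤ -(η * ‖∇ f x‖ * lam * ((1 + K * η) * ‖∇ f x‖)) := by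
      linarith [mul_le_mul_of_nonneg_right hcoef (mul_nonneg hg (norm_nonneg (∇ f x)))]
    _ ≤ -(η * ‖∇ f x‖ * lam * ‖∇ f (x - η • ∇ f x)‖) := neg_le_neg (by gcongr)
    _ = -lam * η * ‖∇ f x‖ * ‖∇ f (x - η • ∇ f x)‖ := by ring

theorem stmt_7 {N : ℕ} (R : EuclideanSpace ℝ (Fin N) → ℝ) (L lam η : ℝ)
    (hR : Differentiable ℝ R) (hL : 0 < L) (hlam : lam ∈ Set.Ioo (0 : ℝ) 1)
    (s : Set (EuclideanSpace ℝ (Fin N))) (hs : Convex ℝ s)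
    (θ : EuclideanSpace ℝ (Fin N)) (hθ : θ ∈ s)
    (hθ' : θ - η • gradient R θ ∈ s)
    (hlip : LipschitzOnWith (Real.toNNReal L) (gradient R) s)
    (hη : 0 < η) (hη' : η ≤ 2 * (1 - lam) / ((1 + 2 * lam) * L)) :
    R (θ - η • gradient R θ) - R θ ≤
      -lam * η * ‖gradient R θ‖ * ‖gradient R (θ - η • gradient R θ)‖ := by
  have hstep : η * ((1 + 2 * lam) * Real.toNNReal L) ≤ 2 * (1 - lam) := by
    rw [Real.coe_toNNReal L hL.le]
    exact (le_div_iff₀ (mul_pos (by linarith [hlam.1]) hL)).mp hη'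
  exact armijo_of_gradient_step hs hR hlip hη.le hlam.1.le hstep hθ hθ'
end

section
/- Let (θₖ)_{p≤k≤q} satisfy the Armijo inequality R(θₖ) − R(θ_{k+1}) ≥ λ·ηₖ·‖∇R(θₖ)‖·‖∇R(θ_{k+1})‖ with θ_{k+1} = θₖ − ηₖ∇R(θₖ), and suppose φ : [0,∞) → [0,∞) is increasing, concave, differentiable on (0,∞), with φ'(R* − R(θ))·‖∇R(θ)‖ ≥ 1 along the iterates, where R* is a fixed value with R(θₖ) < R* for p ≤ k ≤ q. Then Σ_{k=p}^{q−1} ‖θ_{k+1} − θₖ‖ ≤ (1/λ)·(φ(R* − R(θ_q)) − φ(R* − R(θ_p))) ≤ (1/λ)·φ(R(θ_p) − R(θ_q)). -/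
/-
Each gradient step is paid for by the KL potential. With `a = R* - R(θₖ) ≤ b = R* - R(θₖ₊₁)`,
the tangent-line inequality for the concave `φ` at `b`, the Armijo decrease and `φ'(b) ‖∇R(θₖ₊₁)‖ ≥ 1`
give `λ ‖θₖ₊₁ - θₖ‖ = λ ηₖ ‖∇R(θₖ)‖ ≤ φ'(b) (b - a) ≤ φ(b) - φ(a)`, and the sum telescopes.
The second bound is the subadditivity of a concave function with `φ(0) ≥ 0`.
-/

open Finset

namespace ConcaveOn

variable {φ : ℝ → ℝ}

theorem mul_map_le_map_mul (hφ : ConcaveOn ℝ (Set.Ici 0) φ) (h0 : 0 ≤ φ 0) {t x : ℝ}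
    (hx : 0 ≤ x) (ht₀ : 0 ≤ t) (ht₁ : t ≤ 1) : t * φ x ≤ φ (t * x) := by
  have h := hφ.2 (Set.mem_Ici.2 hx) Set.self_mem_Ici ht₀ (sub_nonneg.2 ht₁) (add_sub_cancel t 1)
  simp only [smul_eq_mul, mul_zero, add_zero] at h
  nlinarith

theorem map_add_le_add (hφ : ConcaveOn ℝ (Set.Ici 0) φ) (h0 : 0 ≤ φ 0) {x y : ℝ}
    (hx : 0 ≤ x) (hy : 0 ≤ y) : φ (x + y) ≤ φ x + φ y := by
  rcases (add_nonneg hx hy).eq_or_lt with hs | hs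
  · obtain ⟨rfl, rfl⟩ : x = 0 ∧ y = 0 := ⟨by linarith, by linarith⟩
    simpa using h0
  · set s := x + y
    have hxs : x / s * s = x := div_mul_cancel₀ x hs.ne'
    have hys : (1 - x / s) * s = y := by field_simp; ring
    have hle : x / s ≤ 1 := (div_le_one hs).2 (by linarith)
    calc φ s = x / s * φ s + (1 - x / s) * φ s := by ring
      _ ≤ φ (x / s * s) + φ ((1 - x / s) * s) :=
        add_le_add (hφ.mul_map_le_map_mul h0 hs.le (by positivity) hle)
          (hφ.mul_map_le_map_mul h0 hs.le (sub_nonneg.2 hle) (sub_le_self 1 (by positivity)))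
      _ = φ x + φ y := by rw [hxs, hys]

theorem deriv_mul_sub_le {S : Set ℝ} {φ' a b : ℝ} (hφ : ConcaveOn ℝ S φ) (ha : a ∈ S) (hb : b ∈ S)
    (hab : a ≤ b) (hφ' : HasDerivAt φ φ' b) : φ' * (b - a) ≤ φ b - φ a := by
  rcases hab.eq_or_lt with rfl | hlt
  · simp
  · have h := hφ.le_slope_of_hasDerivAt ha hb hlt hφ'
    rwa [slope_def_field, le_div_iff₀ (sub_pos.2 hlt)] at h

end ConcaveOn

section GradientStep

variable {E : Type*} [NormedAddCommGroup E] {R : E → ℝ} {lam η : ℝ} {x x' g g' : E}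

theorem le_of_armijo (hlam : 0 ≤ lam) (hη : 0 ≤ η)
    (harmijo : R x - R x' ≥ lam * η * ‖g‖ * ‖g'‖) : R x' ≤ R x := by
  have : 0 ≤ lam * η * ‖g‖ * ‖g'‖ := by positivity
  linarith

theorem mul_norm_sub_le_of_armijo_of_kl [NormedSpace ℝ E] {φ φ' : ℝ → ℝ} {Rstar : ℝ}
    (hlam : 0 ≤ lam) (hη : 0 ≤ η) (hx' : x' = x - η • g)
    (harmijo : R x - R x' ≥ lam * η * ‖g‖ * ‖g'‖) (hx : R x < Rstar)
    (hφ : ConcaveOn ℝ (Set.Ici 0) φ) (hφ' : HasDerivAt φ (φ' (Rstar - R x')) (Rstar - R x'))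
    (hKL : φ' (Rstar - R x') * ‖g'‖ ≥ 1) :
    lam * ‖x' - x‖ ≤ φ (Rstar - R x') - φ (Rstar - R x) := by
  have hdesc := le_of_armijo hlam hη harmijo
  have hnorm : ‖x' - x‖ = η * ‖g‖ := by
    rw [hx', sub_sub_cancel_left, norm_neg, norm_smul, Real.norm_of_nonneg hη]
  have hslope : 0 ≤ φ' (Rstar - R x') := by
    by_contra! h
    nlinarith [norm_nonneg g']
  calc lam * ‖x' - x‖ ≤ lam * (η * ‖g‖) * (φ' (Rstar - R x') * ‖g'‖) := by
        rw [hnorm]; exact le_mul_of_one_le_right (by positivity) hKL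
    _ = φ' (Rstar - R x') * (lam * η * ‖g‖ * ‖g'‖) := by ring
    _ ≤ φ' (Rstar - R x') * ((Rstar - R x') - (Rstar - R x)) :=
        mul_le_mul_of_nonneg_left (by linarith) hslope
    _ ≤ φ (Rstar - R x') - φ (Rstar - R x) :=
        hφ.deriv_mul_sub_le (Set.mem_Ici.2 (by linarith)) (Set.mem_Ici.2 (by linarith))
          (by linarith) hφ'

end GradientStep

theorem stmt_11_general {N : ℕ} (R : EuclideanSpace ℝ (Fin N) → ℝ)
    (θ : ℕ → EuclideanSpace ℝ (Fin N)) (η : ℕ → ℝ) (lam Rstar : ℝ)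
    (φ φ' : ℝ → ℝ) (p q : ℕ) (hpq : p ≤ q)
    (hlam : lam ∈ Set.Ioo (0 : ℝ) 1) (hη : ∀ k, 0 < η k)
    (hrec : ∀ k, p ≤ k → k < q → θ (k + 1) = θ k - η k • gradient R (θ k))
    (harmijo : ∀ k, p ≤ k → k < q →
      R (θ k) - R (θ (k + 1)) ≥
        lam * η k * ‖gradient R (θ k)‖ * ‖gradient R (θ (k + 1))‖)
    (hbelow : ∀ k, p ≤ k → k ≤ q → R (θ k) < Rstar)
    (hφconc : ConcaveOn ℝ (Set.Ici 0) φ)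
    (hφnonneg : ∀ x ∈ Set.Ici (0 : ℝ), 0 ≤ φ x)
    (hφderiv : ∀ y ∈ Set.Ioi (0 : ℝ), HasDerivAt φ (φ' y) y)
    (hKL : ∀ k, p ≤ k → k ≤ q → φ' (Rstar - R (θ k)) * ‖gradient R (θ k)‖ ≥ 1) :
    (∑ k ∈ Finset.Ico p q, ‖θ (k + 1) - θ k‖) ≤
        (1 / lam) * (φ (Rstar - R (θ q)) - φ (Rstar - R (θ p))) ∧
      (1 / lam) * (φ (Rstar - R (θ q)) - φ (Rstar - R (θ p))) ≤
        (1 / lam) * φ (R (θ p) - R (θ q)) := by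
  obtain ⟨hlam, -⟩ := hlam
  have hstep (k : ℕ) (hk : k ∈ Ico p q) :
      lam * ‖θ (k + 1) - θ k‖ ≤ φ (Rstar - R (θ (k + 1))) - φ (Rstar - R (θ k)) := by
    obtain ⟨hpk, hkq⟩ := mem_Ico.1 hk
    exact mul_norm_sub_le_of_armijo_of_kl hlam.le (hη k).le (hrec k hpk hkq) (harmijo k hpk hkq)
      (hbelow k hpk hkq.le) hφconc (hφderiv _ (sub_pos.2 (hbelow (k + 1) (by omega) hkq)))
      (hKL (k + 1) (by omega) hkq)
  have hdesc : R (θ q) ≤ R (θ p) := by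
    have h : ∑ k ∈ Ico p q, (R (θ (k + 1)) - R (θ k)) ≤ 0 := sum_nonpos fun k hk => by
      obtain ⟨hpk, hkq⟩ := mem_Ico.1 hk
      exact sub_nonpos.2 (le_of_armijo hlam.le (hη k).le (harmijo k hpk hkq))
    rwa [sum_Ico_sub (fun k => R (θ k)) hpq, sub_nonpos] at h
  refine ⟨?_, mul_le_mul_of_nonneg_left ?_ (by positivity)⟩
  · rw [one_div_mul_eq_div, le_div_iff₀' hlam, mul_sum]
    exact (sum_le_sum hstep).trans_eq (sum_Ico_sub (fun k => φ (Rstar - R (θ k))) hpq)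
  · have h := hφconc.map_add_le_add (hφnonneg 0 Set.self_mem_Ici)
      (sub_pos.2 (hbelow p le_rfl hpq)).le (sub_nonneg.2 hdesc)
    rw [sub_add_sub_cancel] at h
    linarith

theorem stmt_11 {N : ℕ} (R : EuclideanSpace ℝ (Fin N) → ℝ)
    (θ : ℕ → EuclideanSpace ℝ (Fin N)) (η : ℕ → ℝ) (lam Rstar : ℝ)
    (φ φ' : ℝ → ℝ) (p q : ℕ) (hpq : p ≤ q)
    (hlam : lam ∈ Set.Ioo (0 : ℝ) 1) (hη : ∀ k, 0 < η k)
    (hrec : ∀ k, p ≤ k → k < q → θ (k + 1) = θ k - η k • gradient R (θ k))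
    (harmijo : ∀ k, p ≤ k → k < q →
      R (θ k) - R (θ (k + 1)) ≥
        lam * η k * ‖gradient R (θ k)‖ * ‖gradient R (θ (k + 1))‖)
    (hbelow : ∀ k, p ≤ k → k ≤ q → R (θ k) < Rstar)
    (hmono : ∀ k, p ≤ k → k < q → Rstar - R (θ (k + 1)) ≥ Rstar - R (θ k))
    (hφmono : MonotoneOn φ (Set.Ici 0))
    (hφconc : ConcaveOn ℝ (Set.Ici 0) φ)
    (hφnonneg : ∀ x ∈ Set.Ici (0 : ℝ), 0 ≤ φ x)
    (hφderiv : ∀ y ∈ Set.Ioi (0 : ℝ), HasDerivAt φ (φ' y) y)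
    (hKL : ∀ k, p ≤ k → k ≤ q → φ' (Rstar - R (θ k)) * ‖gradient R (θ k)‖ ≥ 1) :
    (∑ k ∈ Finset.Ico p q, ‖θ (k + 1) - θ k‖) ≤
        (1 / lam) * (φ (Rstar - R (θ q)) - φ (Rstar - R (θ p))) ∧
      (1 / lam) * (φ (Rstar - R (θ q)) - φ (Rstar - R (θ p))) ≤
        (1 / lam) * φ (R (θ p) - R (θ q)) :=
  stmt_11_general R θ η lam Rstar φ φ' p q hpq hlam hη hrec harmijo hbelow hφconc hφnonneg hφderiv
    hKL
end
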